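/- There exist a constant c > 0 and an integer N such that for all integers n, m ≥ N and every integer k with 1 ≤ k < m/2, the zero-error randomized query complexity satisfies R0(h_{k,n,m}) ≥ c·n·m. -/

import Mathlib

open Classical
open scoped ENNReal

set_option maxHeartbeats 1000000

/-! ### Deterministic decision trees -/

inductive DTree (ι σ : Type) : Type
  | leaf (b : Bool) : DTree ι σ
  | node (v : ι) (child : σ → DTree ι σ) : DTree ι σ

namespace DTree

variable {ι σ : Type}

/-- The output of the decision tree on input `x`. -/
def eval (x : ι → σ) : DTree ι σ → Bool
  | leaf b => b
  | node v child => (child (x v)).eval x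

/-- The list of variables queried by the decision tree on input `x`,
in the order they are queried. -/
def queryList (x : ι → σ) : DTree ι σ → List ι
  | leaf _ => []
  | node v child => v :: (child (x v)).queryList x

/-- The cost of the decision tree on input `x`: the number of internal nodes visited. -/
def cost (T : DTree ι σ) (x : ι → σ) : ℕ := (T.queryList x).length

/-- `T` computes `f` if it outputs `f x` on every input `x`. -/
def Computes (T : DTree ι σ) (f : (ι → σ) → Bool) : Prop := ∀ x, T.eval x = f x

end DTree

/-- Deterministic query complexity. -/
noncomputable def detComplexity {ι σ : Type} (f : (ι → σ) → Bool) : ℕ :=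
  sInf {d : ℕ | ∃ T : DTree ι σ, T.Computes f ∧ ∀ x, T.cost x ≤ d}

/-- Expected cost of a randomized decision tree (a distribution over deterministic
decision trees) on input `x`. -/
noncomputable def expCost {ι σ : Type} (μ : PMF (DTree ι σ)) (x : ι → σ) : ℝ≥0∞ :=
  ∑' T : DTree ι σ, μ T * (T.cost x : ℝ≥0∞)

/-- Zero-error (Las Vegas) randomized query complexity. -/
noncomputable def R0query {ι σ : Type} (f : (ι → σ) → Bool) : ℝ≥0∞ :=
  ⨅ μ ∈ {μ : PMF (DTree ι σ) | ∀ T ∈ μ.support, T.Computes f},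
    ⨆ x : ι → σ, expCost μ x

/-- One-sided error randomized query complexity. -/
noncomputable def R1query {ι σ : Type} (f : (ι → σ) → Bool) : ℝ≥0∞ :=
  ⨅ μ ∈ {μ : PMF (DTree ι σ) |
      (∀ x, f x = false → ∀ T ∈ μ.support, T.eval x = false) ∧
      (∀ x, f x = true → 1 / 2 ≤ ∑' T : DTree ι σ, if T.eval x = true then μ T else 0)},
    ⨆ x : ι → σ, expCost μ x

/-- Bounded-error (Monte Carlo) randomized query complexity. -/
noncomputable def Rquery {ι σ : Type} (f : (ι → σ) → Bool) : ℝ≥0∞ :=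
  ⨅ μ ∈ {μ : PMF (DTree ι σ) |
      ∀ x, 9 / 10 ≤ ∑' T : DTree ι σ, if T.eval x = f x then μ T else 0},
    ⨆ x : ι → σ, expCost μ x
/-! ### Quantum query algorithms -/

/-- The standard quantum query oracle `O_x |j,p⟩|w⟩ = |j, p + x_j mod S⟩|w⟩`,
as a matrix. -/
noncomputable def qOracle {V ω : Type} [DecidableEq V] [DecidableEq ω] {S : ℕ}
    (x : V → Fin S) : Matrix (V × Fin S × ω) (V × Fin S × ω) ℂ :=
  fun r c => if r = (c.1, c.2.1 + x c.1, c.2.2) then 1 else 0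

/-- A quantum query algorithm on inputs `x : V → Fin S`, making `queries` queries, with
workspace `Fin (W+1)`, alternating the unitaries `U 0, …, U queries` with the oracle,
and measuring with the projector `P` at the end. -/
structure QAlg (V : Type) [Fintype V] [DecidableEq V] (S : ℕ) [NeZero S] where
  queries : ℕ
  W : ℕ
  init : V
  U : ℕ → Matrix (V × Fin S × Fin (W + 1)) (V × Fin S × Fin (W + 1)) ℂ
  hU : ∀ t, (U t).conjTranspose * U t = 1 ∧ U t * (U t).conjTranspose = 1
  P : Matrix (V × Fin S × Fin (W + 1)) (V × Fin S × Fin (W + 1)) ℂ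
  hP : P.conjTranspose = P ∧ P * P = P

namespace QAlg

variable {V : Type} [Fintype V] [DecidableEq V] {S : ℕ} [NeZero S]

/-- The state of the quantum algorithm after `t` steps on input `x`. -/
noncomputable def state (A : QAlg V S) (x : V → Fin S) :
    ℕ → (V × Fin S × Fin (A.W + 1) → ℂ)
  | 0 => (A.U 0).mulVec fun r => if r = (A.init, 0, 0) then 1 else 0
  | t + 1 => (A.U (t + 1)).mulVec ((qOracle x).mulVec (A.state x t))

/-- The probability that the algorithm accepts input `x`: `‖P |Ψ_x⟩‖²`. -/
noncomputable def acceptProb (A : QAlg V S) (x : V → Fin S) : ℝ :=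
  ∑ r : V × Fin S × Fin (A.W + 1), Complex.normSq (A.P.mulVec (A.state x A.queries) r)

end QAlg

/-- Bounded-error quantum query complexity (for functions over a finite input
alphabet `σ`, identified with `Fin (card σ)` via a fixed bijection). -/
noncomputable def Qquery {V σ : Type} [Fintype V] [DecidableEq V] [Fintype σ] [Nonempty σ]
    (f : (V → σ) → Bool) : ℕ :=
  letI : NeZero (Fintype.card σ) := ⟨Fintype.card_ne_zero⟩
  sInf {t : ℕ | ∃ A : QAlg V (Fintype.card σ), A.queries = t ∧
    ∀ x : V → σ,
      (f x = true → 9 / 10 ≤ A.acceptProb fun j => Fintype.equivFin σ (x j)) ∧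
      (f x = false → A.acceptProb (fun j => Fintype.equivFin σ (x j)) ≤ 1 / 10)}

/-- Exact quantum query complexity. -/
noncomputable def QEquery {V σ : Type} [Fintype V] [DecidableEq V] [Fintype σ] [Nonempty σ]
    (f : (V → σ) → Bool) : ℕ :=
  letI : NeZero (Fintype.card σ) := ⟨Fintype.card_ne_zero⟩
  sInf {t : ℕ | ∃ A : QAlg V (Fintype.card σ), A.queries = t ∧
    ∀ x : V → σ,
      (f x = true → A.acceptProb (fun j => Fintype.equivFin σ (x j)) = 1) ∧
      (f x = false → A.acceptProb (fun j => Fintype.equivFin σ (x j)) = 0)}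

/-- Approximate degree of a boolean function. -/
noncomputable def adeg {ι : Type} (F : (ι → Bool) → Bool) : ℕ :=
  sInf {d : ℕ | ∃ p : MvPolynomial ι ℝ, p.totalDegree ≤ d ∧
    ∀ y : ι → Bool, |MvPolynomial.eval (fun i => if y i then (1 : ℝ) else 0) p -
      (if F y then 1 else 0)| ≤ 1 / 10}
/-! ### The pointer functions of Göös–Pitassi–Watson type -/

/-- A symbol of the input alphabet: a boolean value, a left pointer, a right pointer,
and a back/internal pointer (to a cell or a column, depending on `β`). -/
structure PSym (n m : ℕ) (β : Type) where
  val : Bool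
  lp : Option (Fin n × Fin m)
  rp : Option (Fin n × Fin m)
  bp : Option β
deriving DecidableEq

/-- The all-ones symbol `(1,⊥,⊥,⊥)`. -/
def PSym.one (n m : ℕ) (β : Type) : PSym n m β := ⟨true, none, none, none⟩

/-- The symbol `(0,⊥,⊥,⊥)`. -/
def PSym.zero (n m : ℕ) (β : Type) : PSym n m β := ⟨false, none, none, none⟩

def PSym.equivProd (n m : ℕ) (β : Type) :
    PSym n m β ≃ Bool × Option (Fin n × Fin m) × Option (Fin n × Fin m) × Option β where
  toFun v := (v.val, v.lp, v.rp, v.bp)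
  invFun p := ⟨p.1, p.2.1, p.2.2.1, p.2.2.2⟩
  left_inv _ := rfl
  right_inv _ := rfl

instance {n m : ℕ} {β : Type} [Fintype β] : Fintype (PSym n m β) :=
  Fintype.ofEquiv _ (PSym.equivProd n m β).symm

instance {n m : ℕ} {β : Type} : Nonempty (PSym n m β) := ⟨PSym.one n m β⟩

/-- The sequence of k bits of `j`, most significant first:  the root-to-leaf path
(`false` = left, `true` = right) of the `j`-th leaf in the complete binary tree of depth `k`. -/
def bitsPath (k j : ℕ) : List Bool :=
  ((List.range k).reverse).map fun i => j.testBit i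

/-- The root-to-leaf path of the leaf labeled `j` (0-indexed) in the balanced binary tree
with `m` leaves: the complete binary tree if `m` is a power of 2, and otherwise the complete
binary tree on `2 ^ ⌊log₂ m⌋` leaves with a pair of children added to each of the
`m - 2 ^ ⌊log₂ m⌋` leftmost leaves. -/
def treePath (m j : ℕ) : List Bool :=
  if m - 2 ^ Nat.log 2 m = 0 then bitsPath (Nat.log 2 m) j
  else if j < 2 * (m - 2 ^ Nat.log 2 m) then
    bitsPath (Nat.log 2 m) (j / 2) ++ [j % 2 == 1]
  else bitsPath (Nat.log 2 m) (j - (m - 2 ^ Nat.log 2 m))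

/-- Starting at cell `a` and following the left/right pointers of `x` as prescribed by the
list `p` of moves (`false` = left pointer, `true` = right pointer); returns `none` if a
null pointer is encountered. -/
def followPath {n m : ℕ} {β : Type} (x : Fin n × Fin m → PSym n m β)
    (a : Fin n × Fin m) (p : List Bool) : Option (Fin n × Fin m) :=
  p.foldl (fun acc b => acc.bind fun c => if b then (x c).rp else (x c).lp) (some a)

/-- The conditions for `x` to be a 1-input of `f_{n,m}`, with marked column `b` and special
element `a`: (1) `b` is the unique all-1 column; (2) `a` is the unique cell of column `b`
with `x_a ≠ (1,⊥,⊥,⊥)`; (3) for every column `j ≠ b` the tree path from `a` to the leaf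
labeled `j` exists, and ends at a cell `ℓ_j` of column `j` holding a 0; (4) the back pointer
of each `ℓ_j` points to the column `b`. -/
def fCond (n m : ℕ) (x : Fin n × Fin m → PSym n m (Fin m))
    (b : Fin m) (a : Fin n × Fin m) : Prop :=
  (∀ j : Fin m, (∀ i : Fin n, (x (i, j)).val = true) ↔ j = b) ∧
  a.2 = b ∧
  (∀ i : Fin n, x (i, b) ≠ PSym.one n m (Fin m) ↔ (i, b) = a) ∧
  ∀ j : Fin m, j ≠ b →
    ∃ ℓ : Fin n × Fin m, followPath x a (treePath m j.1) = some ℓ ∧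
      ℓ.2 = j ∧ (x ℓ).val = false ∧ (x ℓ).bp = some b

/-- The pointer function `f_{n,m}`, with back pointers to the marked column. -/
noncomputable def fFun (n m : ℕ) (x : Fin n × Fin m → PSym n m (Fin m)) : Bool :=
  if ∃ b a, fCond n m x b a then true else false

/-- The conditions for `x` to be a 1-input of `g_{n,m}`, with marked column `b` and special
element `a`: (1)–(3) as for `f_{n,m}`, and (4′) the set of columns `j ≠ b` whose highlighted
zero `ℓ_j` has back pointer to `a` has size exactly `m/2`. -/
def gCond (n m : ℕ) (x : Fin n × Fin m → PSym n m (Fin n × Fin m))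
    (b : Fin m) (a : Fin n × Fin m) : Prop :=
  (∀ j : Fin m, (∀ i : Fin n, (x (i, j)).val = true) ↔ j = b) ∧
  a.2 = b ∧
  (∀ i : Fin n, x (i, b) ≠ PSym.one n m (Fin n × Fin m) ↔ (i, b) = a) ∧
  (∀ j : Fin m, j ≠ b →
    ∃ ℓ : Fin n × Fin m, followPath x a (treePath m j.1) = some ℓ ∧
      ℓ.2 = j ∧ (x ℓ).val = false) ∧
  {j : Fin m | j ≠ b ∧ ∃ ℓ : Fin n × Fin m,
      followPath x a (treePath m j.1) = some ℓ ∧ (x ℓ).bp = some a}.ncard = m / 2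

/-- The pointer function `g_{n,m}`, where exactly `m/2` of the highlighted zeroes point
back to the special element. -/
noncomputable def gFun (n m : ℕ) (x : Fin n × Fin m → PSym n m (Fin n × Fin m)) : Bool :=
  if ∃ b a, gCond n m x b a then true else false

/-- Column `j` is good in `x` (for `g_{n,m}`): `x` is a 1-input with marked column `b ≠ j`
and special element `a`, and the highlighted zero of column `j` points back to `a`. -/
def goodColumn (n m : ℕ) (x : Fin n × Fin m → PSym n m (Fin n × Fin m)) (j : Fin m) : Prop :=
  ∃ b a, gCond n m x b a ∧ j ≠ b ∧
    ∃ ℓ : Fin n × Fin m, followPath x a (treePath m j.1) = some ℓ ∧ (x ℓ).bp = some a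

/-- The conditions for `x` to be a 1-input of `h_{k,n,m}`, with marked columns `b 0,…,b (k-1)`
and special elements `a 0,…,a (k-1)`: (1) the `b s` are exactly the all-1 columns; (2) `a s` is
the unique cell of column `b s` with `x_{a s} ≠ (1,⊥,⊥,⊥)`; (3) the internal pointers of the
`a s` form a cycle and all the `a s` have equal left pointers and equal right pointers;
(4) for every non-marked column `j` the tree path from any `a s` to the leaf labeled `j`
exists and ends at a cell `ℓ_j` of column `j` holding a 0. -/
def hCond (k n m : ℕ) (x : Fin n × Fin m → PSym n m (Fin n × Fin m))
    (b : Fin k → Fin m) (a : Fin k → Fin n × Fin m) : Prop :=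
  Function.Injective b ∧
  (∀ j : Fin m, (∀ i : Fin n, (x (i, j)).val = true) ↔ ∃ s, b s = j) ∧
  (∀ s, (a s).2 = b s) ∧
  (∀ s, ∀ i : Fin n, x (i, b s) ≠ PSym.one n m (Fin n × Fin m) ↔ (i, b s) = a s) ∧
  (∀ s : Fin k, (x (a s)).bp = some (a ⟨(s.1 + 1) % k, Nat.mod_lt _ s.pos⟩)) ∧
  (∀ s t : Fin k, (x (a s)).lp = (x (a t)).lp ∧ (x (a s)).rp = (x (a t)).rp) ∧
  ∀ j : Fin m, (∀ s, b s ≠ j) → ∀ s : Fin k,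
    ∃ ℓ : Fin n × Fin m, followPath x (a s) (treePath m j.1) = some ℓ ∧
      ℓ.2 = j ∧ (x ℓ).val = false

/-- The pointer function `h_{k,n,m}` with `k` marked columns and no back pointers. -/
noncomputable def hFun (k n m : ℕ) (x : Fin n × Fin m → PSym n m (Fin n × Fin m)) : Bool :=
  if ∃ b a, hCond k n m x b a then true else false

/-- The hard input `x^ℓ`: cell `(i,j)` holds `(0,⊥,⊥,⊥)` if `i = ℓ j` and `(1,⊥,⊥,⊥)`
otherwise. -/
def xhard (n m : ℕ) (β : Type) (ℓ : Fin m → Fin n) : Fin n × Fin m → PSym n m β :=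
  fun c => if c.1 = ℓ c.2 then PSym.zero n m β else PSym.one n m β

/-- The set of (distinct) cells queried among the first `t` queries of `T` on input `x`. -/
def queriedUpTo {ι σ : Type} [DecidableEq ι] (T : DTree ι σ) (x : ι → σ) (t : ℕ) :
    Finset ι :=
  ((T.queryList x).take t).toFinset
/-! ### The progress measure for the hard distribution `x^ℓ` -/

/-- Column `j` is compromised (for the input `x^ℓ`), given the set `Q` of queried cells:
the zero cell `(ℓ j, j)` has been queried, or more than `n/2` cells of column `j` have been
queried. -/
def compromisedCol (n m : ℕ) (ℓ : Fin m → Fin n) (Q : Finset (Fin n × Fin m))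
    (j : Fin m) : Prop :=
  (ℓ j, j) ∈ Q ∨ n < 2 * (Q.filter fun c => c.2 = j).card

/-- The progress measure `I_t = A_t + (2/n)·B_t` of the decision tree `T` on the input `x^ℓ`
after `t` queries, where `A_t` is the number of compromised columns and `B_t` is the number
of queried cells lying outside compromised columns. -/
noncomputable def Imeasure (n m : ℕ)
    (T : DTree (Fin n × Fin m) (PSym n m (Fin n × Fin m))) (ℓ : Fin m → Fin n) (t : ℕ) : ℝ :=
  ({j : Fin m |
      compromisedCol n m ℓ (queriedUpTo T (xhard n m (Fin n × Fin m) ℓ) t) j}.ncard : ℝ) +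
    (2 / n) * ({c : Fin n × Fin m | c ∈ queriedUpTo T (xhard n m (Fin n × Fin m) ℓ) t ∧
      ¬ compromisedCol n m ℓ (queriedUpTo T (xhard n m (Fin n × Fin m) ℓ) t) c.2}.ncard : ℝ)
/-! ### The balanced binary tree, via root-to-node paths -/

/-- The node set of the balanced binary tree with `m` leaves: each node is identified with
the left/right path from the root to it, so the nodes are exactly the prefixes of the
root-to-leaf paths. -/
def treeNodes (m : ℕ) : Finset (List Bool) :=
  (Finset.range m).biUnion fun j => (treePath m j).inits.toFinset

/-- The leaves of the balanced binary tree with `m` leaves. -/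
def leafNodes (m : ℕ) : Finset (List Bool) :=
  (Finset.range m).image fun j => treePath m j

/-- The internal nodes of the balanced binary tree with `m` leaves. -/
def internalNodes (m : ℕ) : Finset (List Bool) :=
  treeNodes m \ leafNodes m

/-- The subtree rooted at a node `u`: all nodes of which `u` is a prefix. -/
def subtreeOf (m : ℕ) (u : List Bool) : Finset (List Bool) :=
  (treeNodes m).filter fun w => u <+: w

/-! ### The hard distribution for `h_{1,n,m}` -/

/-- A parameter quadruple `(v, π, ℓᴸ, ℓᴺ)` for the hard distribution: a bit `v`, a map `π`
from internal tree nodes to columns, and row maps `ℓᴸ, ℓᴺ` for leaves resp. internal nodes. -/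
abbrev HardQ (n m : ℕ) : Type :=
  Bool × ({u : List Bool // u ∈ internalNodes m} → Fin m) × (Fin m → Fin n) × (Fin m → Fin n)

/-- The valid parameter quadruples: `π` injective and `ℓᴸ j ≠ ℓᴺ j` for all `j`. -/
noncomputable def hardSet (n m : ℕ) : Finset (HardQ n m) :=
  Finset.univ.filter fun q => Function.Injective q.2.1 ∧ ∀ j, q.2.2.1 j ≠ q.2.2.2 j

/-- The column of the root of the tree (`none` if the tree has no internal node). -/
noncomputable def rootCol (n m : ℕ) (q : HardQ n m) : Option (Fin m) :=
  if h : ([] : List Bool) ∈ internalNodes m then some (q.2.1 ⟨[], h⟩) else none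

/-- The cell where a child node `w` of an internal node is placed: internal nodes go to
cell `(ℓᴺ (π w), π w)`, the leaf labeled `j` goes to cell `(ℓᴸ j, j)`, and the removed leaf
(the one labeled by the root's column) yields a null pointer. -/
noncomputable def childCell (n m : ℕ) (q : HardQ n m) (w : List Bool) :
    Option (Fin n × Fin m) :=
  if h : w ∈ internalNodes m then some (q.2.2.2 (q.2.1 ⟨w, h⟩), q.2.1 ⟨w, h⟩)
  else if h2 : ∃ j : Fin m, w = treePath m j.1 ∧ some j ≠ rootCol n m q then
    some (q.2.2.1 (Classical.choose h2), Classical.choose h2)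
  else none

/-- The input of the hard distribution determined by the parameter quadruple `q`:
the internal node `u` of the tree is placed at cell `(ℓᴺ (π u), π u)` with left and right
pointers to the cells of its children, value `v` and a self-loop internal pointer if `u` is
the root, and value 0 otherwise; for `j ≠ π(root)`, the leaf labeled `j` is placed at cell
`(ℓᴸ j, j)` with value 0 and null pointers; all the remaining cells hold `(1,⊥,⊥,⊥)`. -/
noncomputable def hardInput (n m : ℕ) (q : HardQ n m) :
    Fin n × Fin m → PSym n m (Fin n × Fin m) :=
  fun c =>
    if h : ∃ u : {u : List Bool // u ∈ internalNodes m}, q.2.1 u = c.2 ∧ q.2.2.2 c.2 = c.1 then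
      { val := if (Classical.choose h).1 = [] then q.1 else false
        lp := childCell n m q ((Classical.choose h).1 ++ [false])
        rp := childCell n m q ((Classical.choose h).1 ++ [true])
        bp := if (Classical.choose h).1 = [] then some c else none }
    else if some c.2 ≠ rootCol n m q ∧ c.1 = q.2.2.1 c.2 then PSym.zero n m (Fin n × Fin m)
    else PSym.one n m (Fin n × Fin m)

/-- Column `j` directly satisfies (i) or (ii): one of the cells `(ℓᴸ j, j)`, `(ℓᴺ j, j)` has
been queried, or more than half of the cells of column `j` have been queried. -/
def colBad (n m : ℕ) (q : HardQ n m) (Q : Finset (Fin n × Fin m)) (j : Fin m) : Prop :=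
  (q.2.2.1 j, j) ∈ Q ∨ (q.2.2.2 j, j) ∈ Q ∨ n < 2 * (Q.filter fun c => c.2 = j).card

/-- Column `j` is compromised: it satisfies (i) or (ii), or some ancestor `u` of `π⁻¹(j)`
in the tree is such that column `π u` satisfies (i) or (ii). -/
def compromisedCol19 (n m : ℕ) (q : HardQ n m) (Q : Finset (Fin n × Fin m))
    (j : Fin m) : Prop :=
  colBad n m q Q j ∨
  ∃ w u : {u : List Bool // u ∈ internalNodes m}, q.2.1 w = j ∧
    u.1 <+: w.1 ∧ u.1 ≠ w.1 ∧ colBad n m q Q (q.2.1 u)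

/-- The progress measure `I_t = min{A_t + (4·C0·log₂ m / n)·B_t, m/2}` of the decision tree
`D` on the hard-distribution input given by `q` after `t` queries, where `A_t` is the number
of compromised columns and `B_t` the number of queried cells outside compromised columns. -/
noncomputable def Imeasure19 (n m : ℕ) (C0 : ℝ)
    (D : DTree (Fin n × Fin m) (PSym n m (Fin n × Fin m))) (q : HardQ n m) (t : ℕ) : ℝ :=
  min
    (({j : Fin m | compromisedCol19 n m q (queriedUpTo D (hardInput n m q) t) j}.ncard : ℝ) +
      (4 * C0 * Real.logb 2 m / n) *
        ({c : Fin n × Fin m | c ∈ queriedUpTo D (hardInput n m q) t ∧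
          ¬ compromisedCol19 n m q (queriedUpTo D (hardInput n m q) t) c.2}.ncard : ℝ))
    (m / 2)
/-!
Yao's principle with the uniform distribution on the 0-inputs `x^ℓ`, which hold one zero per
column, in row `ℓ j`. Suppose a tree computing `h_{k,n,m}` makes fewer than `nm/4` queries on
`x^ℓ` and finds fewer than `m/2` of its zeros. Then `k` columns with unfound zeros can be marked,
their zeros becoming the special elements (all pointing to the same children of the root), and
the other internal nodes of the balanced tree can be written into unqueried cells outside the
marked columns and the zeros, with the leaf of column `j` at `(ℓ j, j)`. This is a 1-input
that agrees with `x^ℓ` on every query, which is impossible. Hence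
`nm ≤ 4·cost + 2n·(zeros found)` for every `ℓ`. Re-randomising the zero of one column shows
that finding it takes `n/2` queries in that column on average, so the average cost over `ℓ`
is at least `nm/8`.
-/

namespace DTree

variable {ι σ : Type}

theorem eval_eq_of_forall_mem_queryList (T : DTree ι σ) {x y : ι → σ}
    (h : ∀ v ∈ T.queryList x, y v = x v) : T.eval y = T.eval x := by
  induction T with
  | leaf b => rfl
  | node v child ih =>
    have hv : y v = x v := h v (by simp [queryList])
    simp only [eval, hv]
    exact ih _ fun w hw => h w (by simp [queryList, hw])

theorem queryList_node (v : ι) (child : σ → DTree ι σ) (x : ι → σ) :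
    (node v child).queryList x = v :: (child (x v)).queryList x := rfl

section Family

variable {α : Type} {v : α → ι} {y : α → ι → σ}

theorem exists_forall_apply_eq {R : Finset α}
    (hy : ∀ i ∈ R, ∀ i' ∈ R, ∀ c, c ≠ v i → c ≠ v i' → y i c = y i' c) {w : ι}
    (hw : ∀ i ∈ R, w ≠ v i) (s₀ : σ) : ∃ s, ∀ i ∈ R, y i w = s := by
  rcases R.eq_empty_or_nonempty with rfl | ⟨i₁, hi₁⟩
  · exact ⟨s₀, by simp⟩
  · exact ⟨y i₁ w, fun i hi => hy i hi i₁ hi₁ w (hw i hi) (hw i₁ hi₁)⟩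

theorem filter_mem_queryList_node {R : Finset α} {w : ι} {child : σ → DTree ι σ} {s : σ}
    (hs : ∀ i ∈ R, y i w = s) (hw : ∀ i ∈ R, w ≠ v i) :
    (R.filter fun i => v i ∈ (node w child).queryList (y i)) =
      R.filter fun i => v i ∈ (child s).queryList (y i) :=
  Finset.filter_congr fun i hi => by simp [queryList_node, hs i hi, (hw i hi).symm]

theorem length_filter_queryList_node {V : Set ι} {w : ι} {child : σ → DTree ι σ}
    {x : ι → σ} {s : σ} (hs : x w = s) :
    (((node w child).queryList x).filter (· ∈ V)).length =
      (((child s).queryList x).filter (· ∈ V)).length + if w ∈ V then 1 else 0 := by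
  rw [queryList_node, hs, List.filter_cons]
  split_ifs <;> simp_all

/- The inputs `y i` follow a common path until `v i` is queried, so the `h` indices whose `v i`
is found find it at distinct positions of that path, and the other `r - h` see all of it:
the total number of queries in `V` is at least `h (h + 1) / 2 + (r - h) h ≥ r h / 2`. -/
theorem card_mul_card_filter_mem_queryList_le (T : DTree ι σ) (hv : Function.Injective v)
    {V : Set ι} (hvV : ∀ i, v i ∈ V) (R : Finset α)
    (hy : ∀ i ∈ R, ∀ i' ∈ R, ∀ c, c ≠ v i → c ≠ v i' → y i c = y i' c) :
    R.card * (R.filter fun i => v i ∈ T.queryList (y i)).card ≤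
      2 * ∑ i ∈ R, ((T.queryList (y i)).filter (· ∈ V)).length := by
  induction T generalizing R with
  | leaf b => simp [queryList]
  | node w child ih =>
    rcases R.eq_empty_or_nonempty with rfl | ⟨i₂, -⟩
    · simp
    by_cases hw : ∃ i₀ ∈ R, v i₀ = w
    · obtain ⟨i₀, hi₀, rfl⟩ := hw
      set R' := R.erase i₀
      have hi₀R' : i₀ ∉ R' := Finset.notMem_erase i₀ R
      have hy' : ∀ i ∈ R', ∀ i' ∈ R', ∀ c, c ≠ v i → c ≠ v i' → y i c = y i' c :=
        fun i hi i' hi' => hy i (Finset.mem_of_mem_erase hi) i' (Finset.mem_of_mem_erase hi')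
      have hne : ∀ i ∈ R', v i₀ ≠ v i := fun i hi h => Finset.ne_of_mem_erase hi (hv h).symm
      obtain ⟨s, hs⟩ := exists_forall_apply_eq hy' hne (y i₀ (v i₀))
      have hlen₀ :
          1 ≤ (((node (v i₀) child).queryList (y i₀)).filter (· ∈ V)).length := by
        simp [queryList_node, hvV i₀]
      have hH' := Finset.card_filter_le R' fun i => v i ∈ (child s).queryList (y i)
      have hIH := ih s R' hy'
      rw [← Finset.insert_erase hi₀, Finset.filter_insert, if_pos (by simp [queryList_node]),
        Finset.sum_insert hi₀R', Finset.card_insert_of_notMem hi₀R',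
        Finset.card_insert_of_notMem (fun h => hi₀R' (Finset.mem_of_mem_filter _ h)),
        filter_mem_queryList_node hs hne,
        Finset.sum_congr rfl fun i hi => length_filter_queryList_node (V := V) (hs i hi),
        Finset.sum_add_distrib]
      simp only [hvV i₀, if_true, Finset.sum_const, smul_eq_mul, mul_one]
      nlinarith
    · push Not at hw
      have hne : ∀ i ∈ R, w ≠ v i := fun i hi h => hw i hi h.symm
      obtain ⟨s, hs⟩ := exists_forall_apply_eq hy hne (y i₂ w)
      rw [filter_mem_queryList_node hs hne]
      refine (ih s R hy).trans (Nat.mul_le_mul_left 2 (Finset.sum_le_sum fun i hi => ?_))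
      rw [length_filter_queryList_node (hs i hi)]
      exact Nat.le_add_right _ _

end Family

end DTree

theorem le_card_mul_R0query {ι σ α : Type} [Fintype α] [Nonempty α]
    (f : (ι → σ) → Bool) (x : α → ι → σ) (A : ℝ≥0∞)
    (h : ∀ T : DTree ι σ, T.Computes f → A ≤ ∑ a, (T.cost (x a) : ℝ≥0∞)) :
    A ≤ Fintype.card α * R0query f := by
  rw [mul_comm, ← ENNReal.div_le_iff_le_mul (by simp) (by simp)]
  refine le_iInf₂ fun μ hμ => ENNReal.div_le_of_le_mul ?_
  calc A = ∑' T, μ T * A := by rw [ENNReal.tsum_mul_right, μ.tsum_coe, one_mul]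
    _ ≤ ∑' T, μ T * ∑ a, (T.cost (x a) : ℝ≥0∞) := by
      refine ENNReal.tsum_le_tsum fun T => ?_
      by_cases hT : μ T = 0
      · simp [hT]
      · exact mul_le_mul_right (h T (hμ T ((μ.mem_support_iff T).mpr hT))) _
    _ = ∑ a, expCost μ (x a) := by
      simp only [expCost, Finset.mul_sum]
      exact (Summable.tsum_finsetSum fun _ _ => ENNReal.summable)
    _ ≤ ∑ _a : α, ⨆ y, expCost μ y := Finset.sum_le_sum fun a _ => le_iSup _ (x a)
    _ = (⨆ y, expCost μ y) * Fintype.card α := by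
      rw [Finset.sum_const, Finset.card_univ, nsmul_eq_mul, mul_comm]

theorem bitsPath_length (k j : ℕ) : (bitsPath k j).length = k := by
  simp [bitsPath]

theorem eq_of_bitsPath_eq {k a b : ℕ} (ha : a < 2 ^ k) (hb : b < 2 ^ k)
    (h : bitsPath k a = bitsPath k b) : a = b := by
  refine Nat.eq_of_testBit_eq fun i => ?_
  by_cases hik : i < k
  · exact List.map_inj_left.mp h i (by simp [hik])
  · have hk : 2 ^ k ≤ 2 ^ i := Nat.pow_le_pow_right (by norm_num) (by omega)
    rw [Nat.testBit_lt_two_pow (ha.trans_le hk), Nat.testBit_lt_two_pow (hb.trans_le hk)]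

theorem treePath_length (m j : ℕ) :
    (treePath m j).length = Nat.log 2 m ∨ (treePath m j).length = Nat.log 2 m + 1 := by
  unfold treePath
  split_ifs <;> simp [bitsPath_length]

theorem treePath_ne_nil {m : ℕ} (hm : 2 ≤ m) (j : ℕ) : treePath m j ≠ [] := by
  have : 1 ≤ Nat.log 2 m := Nat.log_pos (by norm_num) hm
  intro h
  rcases treePath_length m j with h' | h' <;> simp [h] at h'; omega

theorem eq_of_treePath_prefix {m j j' : ℕ} (hj : j < m) (hj' : j' < m)
    (h : treePath m j <+: treePath m j') : j = j' := by
  unfold treePath at h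
  set L := Nat.log 2 m
  have h2L : 2 ^ L ≤ m := Nat.pow_log_le_self 2 (by omega)
  have hlt : m < 2 * 2 ^ L := by
    have := Nat.lt_pow_succ_log_self (by norm_num : 1 < 2) m; rwa [pow_succ'] at this
  set r := m - 2 ^ L
  by_cases hr0 : r = 0
  · simp only [if_pos hr0] at h
    exact eq_of_bitsPath_eq (by omega) (by omega)
      (h.eq_of_length (by rw [bitsPath_length, bitsPath_length]))
  simp only [if_neg hr0] at h
  by_cases hjl : j < 2 * r <;> by_cases hjl' : j' < 2 * r <;>
    simp only [hjl, hjl', if_true, if_false] at h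
  · obtain ⟨hdiv, hmod⟩ := List.append_inj (h.eq_of_length (by simp [bitsPath_length]))
      (by rw [bitsPath_length, bitsPath_length])
    have := eq_of_bitsPath_eq (by omega) (by omega) hdiv
    simp only [List.cons.injEq, and_true, beq_eq_beq] at hmod
    omega
  · simpa [bitsPath_length] using h.length_le
  · have hpre : bitsPath L (j - r) = bitsPath L (j' / 2) := by
      rw [List.prefix_iff_eq_take.mp h, bitsPath_length]
      exact List.take_left' (bitsPath_length _ _)
    have := eq_of_bitsPath_eq (by omega) (by omega) hpre
    omega
  · have := eq_of_bitsPath_eq (by omega) (by omega)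
      (h.eq_of_length (by rw [bitsPath_length, bitsPath_length]))
    omega

theorem eq_of_treePath_eq {m j j' : ℕ} (hj : j < m) (hj' : j' < m)
    (h : treePath m j = treePath m j') : j = j' :=
  eq_of_treePath_prefix hj hj' (h ▸ List.prefix_refl _)

theorem mem_internalNodes_of_prefix {m j : ℕ} (hj : j < m) {w : List Bool}
    (hw : w <+: treePath m j) (hne : w ≠ treePath m j) : w ∈ internalNodes m := by
  simp only [internalNodes, treeNodes, leafNodes, Finset.mem_sdiff, Finset.mem_biUnion,
    Finset.mem_image, Finset.mem_range, List.mem_toFinset, List.mem_inits]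
  refine ⟨⟨j, hj, hw⟩, ?_⟩
  rintro ⟨j', hj', rfl⟩
  exact hne (by rw [eq_of_treePath_prefix hj' hj hw])

theorem length_le_of_mem_internalNodes {m : ℕ} {w : List Bool} (hw : w ∈ internalNodes m) :
    w.length ≤ Nat.log 2 m := by
  simp only [internalNodes, treeNodes, leafNodes, Finset.mem_sdiff, Finset.mem_biUnion,
    Finset.mem_image, Finset.mem_range, List.mem_toFinset, List.mem_inits] at hw
  obtain ⟨⟨j, hj, hwj⟩, hleaf⟩ := hw
  have hlt : w.length ≠ (treePath m j).length := fun h =>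
    hleaf ⟨j, hj, (hwj.eq_of_length h).symm⟩
  rcases treePath_length m j with h | h <;> have := hwj.length_le <;> omega

-- The leading one keeps lists of different lengths apart.
def pathCode (w : List Bool) : ℕ := w.foldr Nat.bit 1

theorem pathCode_lt (w : List Bool) : pathCode w < 2 ^ (w.length + 1) := by
  induction w with
  | nil => simp [pathCode]
  | cons b t ih => simpa [pathCode] using ih

theorem pathCode_injective : Function.Injective pathCode := by
  have bit_inj :
      ∀ {b b' : Bool} {x x' : ℕ}, Nat.bit b x = Nat.bit b' x' → b = b' ∧ x = x' :=
    fun {b b'} {x x'} h => by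
      have hmod := congrArg (· % 2) h
      have hdiv := congrArg (· / 2) h
      simp only [Nat.bit_mod_two, Nat.bit_div_two] at hmod hdiv
      exact ⟨by cases b <;> cases b' <;> simp_all, hdiv⟩
  have pos : ∀ t, pathCode t ≠ 0 := fun t => by
    induction t with
    | nil => simp [pathCode]
    | cons b t ih => exact Nat.bit_ne_zero b ih
  intro w w' h
  induction w generalizing w' with
  | nil =>
    cases w' with
    | nil => rfl
    | cons b t => exact absurd (bit_inj (b := true) (x := 0) h).2.symm (pos t)
  | cons b t ih =>
    cases w' with
    | nil => exact absurd (bit_inj (b' := true) (x' := 0) h).2 (pos t)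
    | cons b' t' =>
      obtain ⟨rfl, ht⟩ := bit_inj h
      rw [ih ht]

theorem card_internalNodes_le (m : ℕ) : (internalNodes m).card ≤ 2 * m := by
  rcases Nat.eq_zero_or_pos m with rfl | hm
  · simp [internalNodes, treeNodes]
  calc (internalNodes m).card ≤ (Finset.range (2 ^ (Nat.log 2 m + 1))).card := by
        refine Finset.card_le_card_of_injOn pathCode (fun w hw => ?_)
          pathCode_injective.injOn
        have := length_le_of_mem_internalNodes hw
        simpa using (pathCode_lt w).trans_le (Nat.pow_le_pow_right (by norm_num) (by omega))
    _ = 2 * 2 ^ Nat.log 2 m := by rw [Finset.card_range, pow_succ']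
    _ ≤ 2 * m := by have := Nat.pow_log_le_self 2 hm.ne'; omega

theorem followPath_append_singleton {n m : ℕ} {β : Type} (x : Fin n × Fin m → PSym n m β)
    (a : Fin n × Fin m) (p : List Bool) (b : Bool) :
    followPath x a (p ++ [b]) =
      (followPath x a p).bind fun c => if b then (x c).rp else (x c).lp := by
  simp [followPath, List.foldl_append]

theorem followPath_eq_of_forall_prefix {n m : ℕ} {β : Type} {x : Fin n × Fin m → PSym n m β}
    {a : Fin n × Fin m} (cell : List Bool → Option (Fin n × Fin m)) (h₀ : cell [] = some a)
    {P : List Bool} (hstep : ∀ u (b : Bool), u ++ [b] <+: P →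
      (cell u).bind (fun c => if b then (x c).rp else (x c).lp) = cell (u ++ [b])) :
    followPath x a P = cell P := by
  induction P using List.reverseRecOn with
  | nil => exact h₀.symm
  | append_singleton u b ih =>
    rw [followPath_append_singleton, ih fun u' b' h => hstep u' b' (h.trans (by simp)),
      hstep u b (List.prefix_refl _)]

def nonrootInternalNodes (m : ℕ) : Finset (List Bool) := (internalNodes m).erase []

def cycleNext {k : ℕ} (s : Fin k) : Fin k := ⟨(s.1 + 1) % k, Nat.mod_lt _ s.pos⟩

section Extension

variable {n m k : ℕ} (ℓ : Fin m → Fin n) (b : Fin k → Fin m)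
  (ψ : List Bool → Fin n × Fin m)

/-- Where the node `w` of the tree sits in the extended input: the leaf of column `j` on the
zero `(ℓ j, j)` of `x^ℓ`, a non-root internal node `w` at `ψ w`; the root is duplicated over
the special elements and has no cell of its own. -/
noncomputable def nodeCell (w : List Bool) : Option (Fin n × Fin m) :=
  if h : ∃ j : Fin m, treePath m j = w then some (ℓ h.choose, h.choose)
  else if w ∈ nonrootInternalNodes m then some (ψ w) else none

/-- The 1-input of `h_{k,n,m}` obtained from `x^ℓ` by making the zeros `(ℓ (b s), b s)` of
the columns `b s` special elements, and writing the non-root internal nodes of the tree into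
the cells `ψ w`. -/
noncomputable def extendInput : Fin n × Fin m → PSym n m (Fin n × Fin m) :=
  fun c =>
    if h : ∃ u ∈ nonrootInternalNodes m, ψ u = c then
      ⟨false, nodeCell ℓ ψ (h.choose ++ [false]), nodeCell ℓ ψ (h.choose ++ [true]), none⟩
    else if h : ∃ s, (ℓ (b s), b s) = c then
      ⟨true, nodeCell ℓ ψ [false], nodeCell ℓ ψ [true],
        some (ℓ (b (cycleNext h.choose)), b (cycleNext h.choose))⟩
    else xhard n m _ ℓ c

theorem nodeCell_treePath (j : Fin m) : nodeCell ℓ ψ (treePath m j) = some (ℓ j, j) := by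
  have h : ∃ j' : Fin m, treePath m j' = treePath m j := ⟨j, rfl⟩
  have hj : h.choose = j := Fin.ext (eq_of_treePath_eq h.choose.isLt j.isLt h.choose_spec)
  rw [nodeCell, dif_pos h, hj]

theorem nodeCell_of_mem {w : List Bool} (hw : w ∈ nonrootInternalNodes m) :
    nodeCell ℓ ψ w = some (ψ w) := by
  have hleaf : ¬∃ j : Fin m, treePath m j = w := by
    rintro ⟨j, rfl⟩
    simp [nonrootInternalNodes, internalNodes, leafNodes] at hw
    exact hw.2.2 j j.isLt rfl
  rw [nodeCell, dif_neg hleaf, if_pos hw]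

theorem extendInput_apply_node (hψ : Set.InjOn ψ (nonrootInternalNodes m)) {u : List Bool}
    (hu : u ∈ nonrootInternalNodes m) :
    extendInput ℓ b ψ (ψ u) =
      ⟨false, nodeCell ℓ ψ (u ++ [false]), nodeCell ℓ ψ (u ++ [true]), none⟩ := by
  have h : ∃ u' ∈ nonrootInternalNodes m, ψ u' = ψ u := ⟨u, hu, rfl⟩
  have hu' : h.choose = u := hψ h.choose_spec.1 hu h.choose_spec.2
  rw [extendInput, dif_pos h, hu']

theorem extendInput_apply_special (hb : Function.Injective b)
    (hψ : ∀ u ∈ nonrootInternalNodes m, ∀ s, (ψ u).2 ≠ b s) (s : Fin k) :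
    extendInput ℓ b ψ (ℓ (b s), b s) =
      ⟨true, nodeCell ℓ ψ [false], nodeCell ℓ ψ [true],
        some (ℓ (b (cycleNext s)), b (cycleNext s))⟩ := by
  have h₁ : ¬∃ u ∈ nonrootInternalNodes m, ψ u = (ℓ (b s), b s) := by
    rintro ⟨u, hu, he⟩
    exact hψ u hu s (by rw [he])
  have h₂ : ∃ t, (ℓ (b t), b t) = (ℓ (b s), b s) := ⟨s, rfl⟩
  have ht : h₂.choose = s := hb (congrArg Prod.snd h₂.choose_spec)
  rw [extendInput, dif_neg h₁, dif_pos h₂, ht]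

theorem extendInput_apply_of_forall_ne {c : Fin n × Fin m}
    (h₁ : ∀ u ∈ nonrootInternalNodes m, ψ u ≠ c) (h₂ : ∀ s, (ℓ (b s), b s) ≠ c) :
    extendInput ℓ b ψ c = xhard n m _ ℓ c := by
  rw [extendInput, dif_neg (by simpa using h₁), dif_neg (by simpa using h₂)]

variable {ℓ b ψ}

theorem extendInput_apply_column (hb : Function.Injective b)
    (hψ : ∀ u ∈ nonrootInternalNodes m, ∀ s, (ψ u).2 ≠ b s) {i : Fin n} {s : Fin k}
    (hi : i ≠ ℓ (b s)) : extendInput ℓ b ψ (i, b s) = PSym.one n m _ := by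
  rw [extendInput_apply_of_forall_ne ℓ b ψ (fun u hu h => hψ u hu s (by rw [h]))
    (fun t h => hi (by cases hb (congrArg Prod.snd h); exact (congrArg Prod.fst h).symm)),
    xhard, if_neg hi]

theorem extendInput_apply_zero (hψ : ∀ u ∈ nonrootInternalNodes m, (ψ u).1 ≠ ℓ (ψ u).2)
    {j : Fin m} (hj : ∀ s, b s ≠ j) : extendInput ℓ b ψ (ℓ j, j) = PSym.zero n m _ := by
  rw [extendInput_apply_of_forall_ne ℓ b ψ (fun u hu h => hψ u hu (by rw [h]))
    (fun s h => hj s (congrArg Prod.snd h)), xhard, if_pos rfl]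

theorem followPath_extendInput (hm : 2 ≤ m) (hb : Function.Injective b)
    (hψinj : Set.InjOn ψ (nonrootInternalNodes m))
    (hψ : ∀ u ∈ nonrootInternalNodes m, ∀ s, (ψ u).2 ≠ b s) (s : Fin k) (j : Fin m) :
    followPath (extendInput ℓ b ψ) (ℓ (b s), b s) (treePath m j) = some (ℓ j, j) := by
  set cell : List Bool → Option (Fin n × Fin m) :=
    fun u => if u = [] then some (ℓ (b s), b s) else nodeCell ℓ ψ u
  have hcell : cell (treePath m j) = some (ℓ j, j) := by
    simp only [cell, if_neg (treePath_ne_nil hm j), nodeCell_treePath]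
  rw [← hcell]
  refine followPath_eq_of_forall_prefix cell rfl fun u c hpre => ?_
  by_cases hu : u = []
  · subst hu
    cases c <;> simp [cell, extendInput_apply_special ℓ b ψ hb hψ]
  · have hpre' : u <+: treePath m j := (List.prefix_append u [c]).trans hpre
    have hne : u ≠ treePath m j := fun h => by simpa [h] using hpre.length_le
    have hmem : u ∈ nonrootInternalNodes m :=
      Finset.mem_erase.mpr ⟨hu, mem_internalNodes_of_prefix j.isLt hpre' hne⟩
    cases c <;>
      simp [cell, hu, nodeCell_of_mem ℓ ψ hmem, extendInput_apply_node ℓ b ψ hψinj hmem]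

theorem hCond_extendInput (hm : 2 ≤ m) (hb : Function.Injective b)
    (hψinj : Set.InjOn ψ (nonrootInternalNodes m))
    (hψcol : ∀ u ∈ nonrootInternalNodes m, ∀ s, (ψ u).2 ≠ b s)
    (hψzero : ∀ u ∈ nonrootInternalNodes m, (ψ u).1 ≠ ℓ (ψ u).2) :
    hCond k n m (extendInput ℓ b ψ) b fun s => (ℓ (b s), b s) := by
  have hspecial := extendInput_apply_special ℓ b ψ hb hψcol
  have hcolumn : ∀ s i, extendInput ℓ b ψ (i, b s) ≠ PSym.one n m _ ↔ i = ℓ (b s) := by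
    intro s i
    by_cases hi : i = ℓ (b s)
    · simp [hi, hspecial, PSym.one]
    · simp [hi, extendInput_apply_column hb hψcol hi]
  refine ⟨hb, fun j => ⟨fun hall => ?_, ?_⟩, fun s => rfl, fun s i => ?_, fun s => ?_,
    fun s t => ?_, fun j hj s => ⟨(ℓ j, j), followPath_extendInput hm hb hψinj hψcol s j, rfl,
      by simp [extendInput_apply_zero hψzero hj, PSym.zero]⟩⟩
  · by_contra hj
    push Not at hj
    simpa [extendInput_apply_zero hψzero hj, PSym.zero] using hall (ℓ j)
  · rintro ⟨s, rfl⟩ i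
    by_cases hi : i = ℓ (b s)
    · simp [hi, hspecial]
    · simp [extendInput_apply_column hb hψcol hi, PSym.one]
  · simp [hcolumn]
  · simp [hspecial, cycleNext]
  · simp [hspecial]

end Extension

theorem hFun_xhard {n m k : ℕ} (hk : 1 ≤ k) (ℓ : Fin m → Fin n) :
    hFun k n m (xhard n m _ ℓ) = false := by
  rw [hFun, if_neg]
  rintro ⟨b, a, -, hcols, -⟩
  simpa [xhard, PSym.zero] using (hcols (b ⟨0, hk⟩)).mpr ⟨_, rfl⟩ (ℓ (b ⟨0, hk⟩))

-- Excluded are `< nm/4` queried cells, `nk < nm/2` cells of the marked columns and `m` zeros,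
-- which leaves more than `nm/4 - m ≥ 2m` cells as soon as `n ≥ 12`.
theorem card_nonrootInternalNodes_le {n m k : ℕ} (hn : 12 ≤ n) (hkm : 2 * k < m)
    (ℓ : Fin m → Fin n) (b : Fin k → Fin m) (Q : Finset (Fin n × Fin m))
    (hQ : 4 * Q.card < n * m) :
    (nonrootInternalNodes m).card ≤
      (Finset.univ.filter fun c : Fin n × Fin m =>
        c ∉ Q ∧ (∀ s, c.2 ≠ b s) ∧ c.1 ≠ ℓ c.2).card := by
  have hcompl : (Finset.univ.filter
      fun c : Fin n × Fin m => ¬(c ∉ Q ∧ (∀ s, c.2 ≠ b s) ∧ c.1 ≠ ℓ c.2)).card ≤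
      Q.card + n * k + m := by
    calc _ ≤ (Q ∪ (Finset.univ ×ˢ Finset.univ.image b) ∪
          Finset.univ.image fun j => (ℓ j, j)).card := by
          refine Finset.card_le_card fun c hc => ?_
          by_cases hcQ : c ∈ Q
          · simp [hcQ]
          by_cases hcb : ∃ s, c.2 = b s
          · obtain ⟨s, hs⟩ := hcb
            simp [hs]
          · simp only [Finset.mem_filter, not_and, not_not] at hc
            push Not at hcb
            exact Finset.mem_union_right _
              (Finset.mem_image.mpr ⟨c.2, by simp, Prod.ext (hc.2 hcQ hcb).symm rfl⟩)
      _ ≤ Q.card + n * k + m := by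
        refine (Finset.card_union_le _ _).trans (add_le_add ((Finset.card_union_le _ _).trans
          (add_le_add_right ?_ _)) (Finset.card_image_le.trans (by simp)))
        rw [Finset.card_product]
        exact Nat.mul_le_mul (by simp) (Finset.card_image_le.trans (by simp))
  have hsplit := Finset.card_filter_add_card_filter_not (s := Finset.univ)
    fun c : Fin n × Fin m => c ∉ Q ∧ (∀ s, c.2 ≠ b s) ∧ c.1 ≠ ℓ c.2
  simp only [Finset.card_univ, Fintype.card_prod, Fintype.card_fin] at hsplit
  have hI := (Finset.card_erase_le (s := internalNodes m) (a := [])).trans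
    (card_internalNodes_le m)
  have hnk : 2 * (n * k) + n ≤ n * m := by nlinarith
  rw [nonrootInternalNodes]
  nlinarith

theorem exists_hFun_eq_true_of_agree_xhard {n m k : ℕ} (hn : 12 ≤ n) (hk : 1 ≤ k)
    (hkm : 2 * k < m) (ℓ : Fin m → Fin n) (Q : Finset (Fin n × Fin m))
    (hQ : 4 * Q.card < n * m)
    (hhits : 2 * (Finset.univ.filter fun j => (ℓ j, j) ∈ Q).card < m) :
    ∃ y, (∀ c ∈ Q, y c = xhard n m _ ℓ c) ∧ hFun k n m y = true := by
  have hU : k ≤ (Finset.univ.filter fun j => (ℓ j, j) ∉ Q).card := by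
    have := Finset.card_filter_add_card_filter_not (s := Finset.univ)
      fun j : Fin m => (ℓ j, j) ∈ Q
    simp only [Finset.card_univ, Fintype.card_fin] at this
    omega
  obtain ⟨e⟩ := Function.Embedding.nonempty_of_card_le (α := Fin k)
    (β := Finset.univ.filter fun j => (ℓ j, j) ∉ Q)
    (by rw [Fintype.card_fin, Fintype.card_coe]; exact hU)
  set b : Fin k → Fin m := fun s => (e s).1
  have hb : Function.Injective b := fun s t h => e.injective (Subtype.ext h)
  have hbQ : ∀ s, (ℓ (b s), b s) ∉ Q := fun s => (Finset.mem_filter.mp (e s).2).2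
  set Avail := Finset.univ.filter fun c : Fin n × Fin m =>
    c ∉ Q ∧ (∀ s, c.2 ≠ b s) ∧ c.1 ≠ ℓ c.2
  have : Nonempty (Fin n × Fin m) := ⟨(⟨0, by omega⟩, ⟨0, by omega⟩)⟩
  obtain ⟨ψ, hψAvail, hψinj⟩ :=
    (nonrootInternalNodes m).finite_toSet.exists_injOn_of_encard_le
    (t := (Avail : Set (Fin n × Fin m))) (by
      simp only [Set.encard_coe_eq_coe_finsetCard]
      exact_mod_cast card_nonrootInternalNodes_le hn hkm ℓ b Q hQ)
  have hψ : ∀ u ∈ nonrootInternalNodes m, ψ u ∉ Q ∧ (∀ s, (ψ u).2 ≠ b s) ∧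
      (ψ u).1 ≠ ℓ (ψ u).2 := fun u hu => by simpa [Avail] using hψAvail hu
  refine ⟨extendInput ℓ b ψ, fun c hc => extendInput_apply_of_forall_ne ℓ b ψ
    (fun u hu h => (hψ u hu).1 (h ▸ hc)) (fun s h => hbQ s (h ▸ hc)), ?_⟩
  rw [hFun, if_pos ⟨b, _, hCond_extendInput (by omega) hb hψinj (fun u hu => (hψ u hu).2.1)
    (fun u hu => (hψ u hu).2.2)⟩]

theorem le_length_queryList_or_le_card_zeros_found {n m k : ℕ} (hn : 12 ≤ n) (hk : 1 ≤ k)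
    (hkm : 2 * k < m) {T : DTree (Fin n × Fin m) (PSym n m (Fin n × Fin m))}
    (hT : T.Computes (hFun k n m)) (ℓ : Fin m → Fin n) :
    n * m ≤ 4 * (T.queryList (xhard n m _ ℓ)).length ∨
      m ≤ 2 * (Finset.univ.filter fun j =>
        (ℓ j, j) ∈ T.queryList (xhard n m _ ℓ)).card := by
  by_contra! h
  set Q := (T.queryList (xhard n m _ ℓ)).toFinset
  have hQ : 4 * Q.card < n * m := by
    have : Q.card ≤ (T.queryList (xhard n m _ ℓ)).length := List.toFinset_card_le _
    omega
  obtain ⟨y, hy, hy1⟩ :=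
    exists_hFun_eq_true_of_agree_xhard hn hk hkm ℓ Q hQ (by simpa [Q] using h.2)
  have := T.eval_eq_of_forall_mem_queryList fun c hc => hy c (List.mem_toFinset.mpr hc)
  rw [hT, hT, hy1, hFun_xhard hk] at this
  exact Bool.true_eq_false.mp this

theorem sum_length_filter_snd_eq {n m : ℕ} (l : List (Fin n × Fin m)) :
    ∑ j : Fin m, (l.filter fun c => c.2 = j).length = l.length := by
  induction l with
  | nil => simp
  | cons c t ih =>
    have hcons : ∀ j : Fin m, ((c :: t).filter fun c' => c'.2 = j).length =
        (t.filter fun c' => c'.2 = j).length + if c.2 = j then 1 else 0 := fun j => by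
      by_cases h : c.2 = j <;> simp [h]
    simp only [hcons, Finset.sum_add_distrib, ih, Finset.sum_ite_eq, Finset.mem_univ, if_true,
      List.length_cons]

theorem card_mul_card_filter_zero_mem_queryList_le {n m : ℕ}
    (T : DTree (Fin n × Fin m) (PSym n m (Fin n × Fin m))) (j : Fin m) :
    n * (Finset.univ.filter fun ℓ : Fin m → Fin n =>
        (ℓ j, j) ∈ T.queryList (xhard n m _ ℓ)).card ≤
      2 * ∑ ℓ : Fin m → Fin n,
        ((T.queryList (xhard n m _ ℓ)).filter fun c => c.2 = j).length := by
  set e := Equiv.funSplitAt j (Fin n)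
  have hsplit : ∀ F : (Fin m → Fin n) → ℕ, ∑ ℓ, F ℓ = ∑ g, ∑ i, F (e.symm (i, g)) :=
    fun F => by
    rw [← e.symm.sum_comp, Fintype.sum_prod_type, Finset.sum_comm]
  have hj : ∀ i g, e.symm (i, g) j = i := fun i g => by simp [e]
  rw [Finset.card_filter, hsplit, hsplit, Finset.mul_sum, Finset.mul_sum]
  refine Finset.sum_le_sum fun g _ => ?_
  have hagree : ∀ i ∈ Finset.univ, ∀ i' ∈ Finset.univ, ∀ c : Fin n × Fin m,
      c ≠ (i, j) → c ≠ (i', j) →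
        xhard n m (Fin n × Fin m) (e.symm (i, g)) c = xhard n m _ (e.symm (i', g)) c := by
    intro i _ i' _ c hci hci'
    by_cases hcj : c.2 = j
    · have h₁ : c.1 ≠ i := fun h => hci (Prod.ext h hcj)
      have h₂ : c.1 ≠ i' := fun h => hci' (Prod.ext h hcj)
      simp [xhard, hcj, hj, h₁, h₂]
    · simp [xhard, e, hcj]
  have key := T.card_mul_card_filter_mem_queryList_le (v := fun i => (i, j))
    (y := fun i => xhard n m _ (e.symm (i, g))) (fun i i' h => congrArg Prod.fst h)
    (V := {c | c.2 = j}) (fun i => rfl) Finset.univ hagree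
  simp only [Finset.card_univ, Fintype.card_fin, Set.mem_ofPred_eq] at key
  simp only [hj, ← Finset.card_filter]
  convert key; exact rfl

theorem mul_mul_pow_le_sum_cost {n m k : ℕ} (hn : 12 ≤ n) (hk : 1 ≤ k) (hkm : 2 * k < m)
    {T : DTree (Fin n × Fin m) (PSym n m (Fin n × Fin m))} (hT : T.Computes (hFun k n m)) :
    n * m * n ^ m ≤ 8 * ∑ ℓ : Fin m → Fin n, T.cost (xhard n m _ ℓ) := by
  set zerosFound : (Fin m → Fin n) → ℕ := fun ℓ =>
    (Finset.univ.filter fun j => (ℓ j, j) ∈ T.queryList (xhard n m _ ℓ)).card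
  have hpoint : ∀ ℓ, n * m ≤ 4 * T.cost (xhard n m _ ℓ) + 2 * (n * zerosFound ℓ) :=
    fun ℓ => by
    rcases le_length_queryList_or_le_card_zeros_found hn hk hkm hT ℓ with h | h
    · exact h.trans (Nat.le_add_right _ _)
    · exact le_add_left (by nlinarith)
  have hzeros :
      ∑ ℓ, n * zerosFound ℓ ≤ 2 * ∑ ℓ : Fin m → Fin n, T.cost (xhard n m _ ℓ) :=
    calc ∑ ℓ, n * zerosFound ℓ
        = ∑ j, n * (Finset.univ.filter fun ℓ : Fin m → Fin n =>
            (ℓ j, j) ∈ T.queryList (xhard n m _ ℓ)).card := by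
          simp only [zerosFound, Finset.card_filter, ← Finset.mul_sum]
          rw [Finset.sum_comm]
      _ ≤ ∑ j, 2 * ∑ ℓ : Fin m → Fin n,
            ((T.queryList (xhard n m _ ℓ)).filter fun c => c.2 = j).length :=
          Finset.sum_le_sum fun j _ => card_mul_card_filter_zero_mem_queryList_le T j
      _ = 2 * ∑ ℓ : Fin m → Fin n, T.cost (xhard n m _ ℓ) := by
          rw [← Finset.mul_sum, Finset.sum_comm]
          simp only [sum_length_filter_snd_eq, DTree.cost]
  calc n * m * n ^ m = ∑ _ℓ : Fin m → Fin n, n * m := by simp [mul_comm]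
    _ ≤ ∑ ℓ, (4 * T.cost (xhard n m _ ℓ) + 2 * (n * zerosFound ℓ)) :=
      Finset.sum_le_sum fun ℓ _ => hpoint ℓ
    _ ≤ 8 * ∑ ℓ : Fin m → Fin n, T.cost (xhard n m _ ℓ) := by
      rw [Finset.sum_add_distrib, ← Finset.mul_sum, ← Finset.mul_sum]
      omega

/-- `R0(h_{k,n,m}) = Ω(n·m)` for `1 ≤ k < m/2`. -/
theorem statement12 :
    ∃ c : ℝ, 0 < c ∧ ∃ N : ℕ, ∀ n m k : ℕ, N ≤ n → N ≤ m → 1 ≤ k → 2 * k < m →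
      ENNReal.ofReal (c * n * m) ≤ R0query (hFun k n m) := by
  refine ⟨1 / 8, by norm_num, 12, fun n m k hn _ hk hkm => ?_⟩
  have : Nonempty (Fin m → Fin n) := ⟨fun _ => ⟨0, by omega⟩⟩
  have hyao := le_card_mul_R0query (hFun k n m) (fun ℓ : Fin m → Fin n => xhard n m _ ℓ)
    ((n ^ m : ℕ) * ((n * m : ℝ≥0∞) / 8)) fun T hT => by
      rw [← mul_div_assoc, ENNReal.div_le_iff (by norm_num) (by norm_num)]
      have := mul_mul_pow_le_sum_cost hn hk hkm hT
      exact_mod_cast (show n ^ m * (n * m) ≤ (∑ ℓ, T.cost (xhard n m _ ℓ)) * 8 by linarith)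
  rw [Fintype.card_fun, Fintype.card_fin, Fintype.card_fin] at hyao
  have hnm : ENNReal.ofReal (1 / 8 * n * m) = (n * m : ℝ≥0∞) / 8 := by
    rw [mul_assoc, ENNReal.ofReal_mul (by norm_num), one_div,
      ENNReal.ofReal_inv_of_pos (by norm_num), div_eq_mul_inv, mul_comm]
    simp
  rw [hnm]
  exact (ENNReal.mul_le_mul_iff_right (Nat.cast_ne_zero.mpr (pow_ne_zero _ (by omega)))
    (ENNReal.natCast_ne_top _)).mp hyao
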